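/- If λ ∈ Γ̃_k with λ₁ ≥ λ₂ ≥ ⋯ ≥ λₙ, then λ_{k-1} > 0 and S_{k-1}(λ|n) ≥ S_{k-1}(λ|n−1) ≥ ⋯ ≥ S_{k-1}(λ|1) > 0. -/

import Mathlib

open Finset

noncomputable def esym (n : ℕ) (k : ℤ) (lam : Fin n → ℝ) : ℝ :=
  if 0 ≤ k then ∑ s ∈ (Finset.univ : Finset (Fin n)).powersetCard k.toNat, ∏ i ∈ s, lam i else 0

noncomputable def esymDel (n : ℕ) (k : ℤ) (p : Fin n) (lam : Fin n → ℝ) : ℝ :=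
  if 0 ≤ k then
    ∑ s ∈ ((Finset.univ : Finset (Fin n)).erase p).powersetCard k.toNat, ∏ i ∈ s, lam i
  else 0

noncomputable def sumHess (n : ℕ) (α : ℝ) (k : ℤ) (lam : Fin n → ℝ) : ℝ :=
  esym n k lam + α * esym n (k - 1) lam

noncomputable def sumHessDel (n : ℕ) (α : ℝ) (k : ℤ) (p : Fin n) (lam : Fin n → ℝ) : ℝ :=
  esymDel n k p lam + α * esymDel n (k - 1) p lam

def Gamma (n k : ℕ) : Set (Fin n → ℝ) :=
  {lam | ∀ m : ℤ, 1 ≤ m → m ≤ (k : ℤ) → 0 < esym n m lam}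

def GammaTilde (n : ℕ) (α : ℝ) (k : ℕ) : Set (Fin n → ℝ) :=
  Gamma n (k - 1) ∩ {lam | 0 < sumHess n α (k : ℤ) lam}

noncomputable def etaMap (n : ℕ) (lam : Fin n → ℝ) : Fin n → ℝ :=
  fun i => (∑ j, lam j) - lam i

def GammaPrime (n : ℕ) (α : ℝ) (k : ℕ) : Set (Fin n → ℝ) :=
  {lam | etaMap n lam ∈ GammaTilde n α k}

/-!
Adjoining `α` as an extra coordinate turns `S_j(λ)` into `σ_j(λ, α)` and `S_{k-1}(λ|i)` into
`σ_{k-1}((λ, α)|i)`, and the hypotheses say that `(λ, α)` lies in Gårding's cone `Γ_k`. Everything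
then follows from Gårding's property that deleting a coordinate maps `Γ_k` into `Γ_{k-1}`.

That property is proved by induction on `k`, moving `x ∈ Γ_{k+1}(A)` along the segment to
`(1, …, 1)`, which stays in `Γ_{k+1}(A)`. On the way `σ_k(x|i)` cannot vanish: if it did, then with
`B = A ∖ {i}` Euler's identity `∑_p x_p σ_k(x|B∖p) = (k+1) σ_{k+1}(x|B)`, the recursion
`σ_k(x|B∖p) = -x_p σ_{k-1}(x|B∖p)` and the induction hypothesis on the closure of `Γ_k` give
`σ_{k+1}(x) = σ_{k+1}(x|B) ≤ 0`.

Monotonicity in the deleted index comes from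
`σ_{j+1}(x|i) - σ_{j+1}(x|p) = (x_p - x_i) σ_j(x|ip)`, and `λ_{k-1} > 0` because deleting the
nonpositive entries keeps `λ` in `Γ_{k-1}`, which forces at least `k - 1` entries to remain.
-/

open Filter Topology

variable {ι κ R : Type*}

def esymOn [CommSemiring R] (A : Finset ι) (j : ℕ) (x : ι → R) : R :=
  ∑ s ∈ A.powersetCard j, ∏ i ∈ s, x i

section Algebra

variable [CommSemiring R] {A : Finset ι} {j : ℕ} {x : ι → R}

@[simp]
lemma esymOn_zero (A : Finset ι) (x : ι → R) : esymOn A 0 x = 1 := by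
  simp [esymOn]

lemma esymOn_eq_zero_of_card_lt (h : #A < j) : esymOn A j x = 0 := by
  simp [esymOn, powersetCard_eq_empty.2 h]

lemma esymOn_const_mul (c : R) : esymOn A j (fun i => c * x i) = c ^ j * esymOn A j x := by
  rw [esymOn, esymOn, mul_sum]
  refine sum_congr rfl fun s hs => ?_
  rw [prod_mul_distrib, prod_const, (mem_powersetCard.1 hs).2]

lemma esymOn_one (A : Finset ι) (j : ℕ) : esymOn A j (fun _ => (1 : R)) = (#A).choose j := by
  simp [esymOn]

lemma esymOn_map (B : Finset κ) (f : κ ↪ ι) : esymOn (B.map f) j x = esymOn B j (x ∘ f) := by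
  simp [esymOn, powersetCard_map]

lemma esymOn_add_const (c : R) (A : Finset ι) (j : ℕ) (x : ι → R) :
    esymOn A j (fun i => x i + c) =
      ∑ r ∈ range (j + 1), ((#A - r).choose (j - r) : R) * c ^ (j - r) * esymOn A r x := by
  classical
  calc esymOn A j (fun i => x i + c)
      = ∑ t ∈ A.powersetCard j, ∑ r ∈ range (j + 1), ∑ u ∈ t.powersetCard r,
          (∏ i ∈ u, x i) * c ^ (j - r) := by
        refine sum_congr rfl fun t ht => ?_
        rw [prod_add, sum_powerset, (mem_powersetCard.1 ht).2]
        refine sum_congr rfl fun r _ => sum_congr rfl fun u hu => ?_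
        rw [prod_const, card_sdiff_of_subset (mem_powersetCard.1 hu).1,
          (mem_powersetCard.1 ht).2, (mem_powersetCard.1 hu).2]
    _ = ∑ r ∈ range (j + 1), ∑ u ∈ A.powersetCard r, ∑ t ∈ A.powersetCard j with u ⊆ t,
          (∏ i ∈ u, x i) * c ^ (j - r) := by
        rw [sum_comm]
        refine sum_congr rfl fun r _ => sum_comm' fun t u => ?_
        grind
    _ = _ := by
        refine sum_congr rfl fun r hr => ?_
        rw [esymOn, mul_sum]
        refine sum_congr rfl fun u hu => ?_
        obtain ⟨huA, hur⟩ := mem_powersetCard.1 hu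
        rw [sum_const, card_filter_powersetCard_subset u A j huA (by grind), hur,
          nsmul_eq_mul]
        ring

variable [DecidableEq ι]

lemma mul_esymOn_erase {m : ι} (hm : m ∈ A) :
    x m * esymOn (A.erase m) j x = ∑ t ∈ A.powersetCard (j + 1) with m ∈ t, ∏ i ∈ t, x i := by
  rw [esymOn, mul_sum]
  refine sum_nbij' (insert m) (·.erase m) (by grind) (by grind) (by grind)
    (fun t ht => insert_erase (mem_filter.1 ht).2) fun s hs => ?_
  rw [prod_insert fun h => notMem_erase m A ((mem_powersetCard.1 hs).1 h)]

lemma esymOn_succ_of_mem {m : ι} (hm : m ∈ A) :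
    esymOn A (j + 1) x = esymOn (A.erase m) (j + 1) x + x m * esymOn (A.erase m) j x := by
  rw [mul_esymOn_erase hm, esymOn, ← sum_filter_not_add_sum_filter _ (m ∈ ·)]
  congr 2
  ext t
  simp only [mem_filter, mem_powersetCard, subset_erase]
  tauto

lemma esymOn_cons {a : ι} (ha : a ∉ A) :
    esymOn (A.cons a ha) (j + 1) x = esymOn A (j + 1) x + x a * esymOn A j x := by
  rw [esymOn_succ_of_mem (mem_cons_self a A), cons_eq_insert, erase_insert ha]

lemma esymOn_insertNone (B : Finset ι) (a : R) (x : ι → R) (j : ℕ) :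
    esymOn (insertNone B) (j + 1) (Option.elim' a x) = esymOn B (j + 1) x + a * esymOn B j x := by
  rw [insertNone, OrderEmbedding.coe_ofMapLEIff, esymOn_cons, esymOn_map, esymOn_map]
  rfl

lemma sum_mul_esymOn_erase (A : Finset ι) (j : ℕ) (x : ι → R) :
    ∑ m ∈ A, x m * esymOn (A.erase m) j x = (j + 1) * esymOn A (j + 1) x := by
  calc ∑ m ∈ A, x m * esymOn (A.erase m) j x
      = ∑ m ∈ A, ∑ t ∈ A.powersetCard (j + 1) with m ∈ t, ∏ i ∈ t, x i :=
        sum_congr rfl fun m hm => mul_esymOn_erase hm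
    _ = ∑ t ∈ A.powersetCard (j + 1), ∑ _m ∈ t, ∏ i ∈ t, x i := by
        refine sum_comm' fun m t => ?_
        grind
    _ = (j + 1) * esymOn A (j + 1) x := by
        rw [esymOn, mul_sum]
        refine sum_congr rfl fun t ht => ?_
        rw [sum_const, (mem_powersetCard.1 ht).2, nsmul_eq_mul]
        push_cast
        ring

end Algebra

lemma esymOn_erase_sub_esymOn_erase [CommRing R] [DecidableEq ι] {A : Finset ι} {i p : ι}
    (hi : i ∈ A) (hp : p ∈ A) (hip : i ≠ p) (j : ℕ) (x : ι → R) :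
    esymOn (A.erase i) (j + 1) x - esymOn (A.erase p) (j + 1) x =
      (x p - x i) * esymOn ((A.erase i).erase p) j x := by
  rw [esymOn_succ_of_mem (mem_erase.2 ⟨hip.symm, hp⟩),
    esymOn_succ_of_mem (mem_erase.2 ⟨hip, hi⟩), erase_right_comm]
  ring

lemma continuous_esymOn [CommSemiring R] [TopologicalSpace R] [IsTopologicalSemiring R]
    (A : Finset ι) (j : ℕ) : Continuous (esymOn A j : (ι → R) → R) := by
  unfold esymOn
  fun_prop

def gardingCone (A : Finset ι) (k : ℕ) : Set (ι → ℝ) :=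
  {x | ∀ j ≤ k, 0 < esymOn A j x}

section GardingCone

variable {A : Finset ι} {k : ℕ} {x : ι → ℝ}

lemma gardingCone_mono {l : ℕ} (h : k ≤ l) : gardingCone A l ⊆ gardingCone A k :=
  fun _ hx j hj => hx j (hj.trans h)

lemma mem_gardingCone_succ :
    x ∈ gardingCone A (k + 1) ↔ x ∈ gardingCone A k ∧ 0 < esymOn A (k + 1) x := by
  refine ⟨fun hx => ⟨gardingCone_mono k.le_succ hx, hx _ le_rfl⟩, fun ⟨hx, hk⟩ j hj => ?_⟩
  rcases hj.lt_or_eq with hj | rfl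
  exacts [hx j (Nat.le_of_lt_succ hj), hk]

lemma card_le_of_mem_gardingCone (hx : x ∈ gardingCone A k) : k ≤ #A := by
  by_contra! h
  exact (hx k le_rfl).ne' (esymOn_eq_zero_of_card_lt h)

lemma esymOn_add_const_pos {j : ℕ} (hx : ∀ r ≤ j, 0 ≤ esymOn A r x) (hj : j ≤ #A) {c : ℝ}
    (hc : 0 < c) : 0 < esymOn A j (fun i => x i + c) := by
  rw [esymOn_add_const]
  refine sum_pos' (fun r hr => ?_) ⟨0, mem_range.2 j.succ_pos, ?_⟩
  · have := hx r (Nat.le_of_lt_succ (mem_range.1 hr))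
    positivity
  · have : 0 < ((#A).choose j : ℝ) := by exact_mod_cast Nat.choose_pos hj
    simp only [Nat.sub_zero, esymOn_zero, mul_one]
    positivity

lemma segment_one_mem_gardingCone (hx : x ∈ gardingCone A k) {s : ℝ} (hs : s ∈ Set.Icc 0 1) :
    (fun i => (1 - s) * x i + s) ∈ gardingCone A k := by
  rcases hs.1.eq_or_lt with rfl | hs0
  · simpa using hx
  intro j hj
  refine esymOn_add_const_pos (fun r hr => ?_) (hj.trans (card_le_of_mem_gardingCone hx)) hs0
  rw [esymOn_const_mul]
  exact mul_nonneg (pow_nonneg (by linarith [hs.2]) r) (hx r (hr.trans hj)).le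

variable [DecidableEq ι]

lemma erase_mem_gardingCone_of_nonpos (hx : x ∈ gardingCone A k) {i : ι} (hi : x i ≤ 0) :
    x ∈ gardingCone (A.erase i) k := by
  by_cases hiA : i ∈ A
  · intro j hj
    induction j with
    | zero => simp
    | succ j ih =>
      have := esymOn_succ_of_mem (x := x) (j := j) hiA
      nlinarith [hx (j + 1) hj, ih (by omega)]
  · rwa [erase_eq_of_notMem hiA]

lemma sdiff_mem_gardingCone_of_nonpos (hx : x ∈ gardingCone A k) {T : Finset ι}
    (hT : ∀ i ∈ T, x i ≤ 0) : x ∈ gardingCone (A \ T) k := by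
  induction T using Finset.induction_on with
  | empty => simpa using hx
  | insert a T _ ih =>
    rw [sdiff_insert]
    exact erase_mem_gardingCone_of_nonpos (ih fun i hi => hT i (mem_insert_of_mem hi))
      (hT a (mem_insert_self a T))

lemma esymOn_erase_nonneg_of_nonneg
    (ih : ∀ (y : ι → ℝ) (B : Finset ι), y ∈ gardingCone B (k + 1) →
      ∀ i ∈ B, y ∈ gardingCone (B.erase i) k)
    (hx : ∀ j ≤ k + 1, 0 ≤ esymOn A j x) (hA : k + 1 ≤ #A) {i : ι} (hi : i ∈ A)
    {j : ℕ} (hj : j ≤ k) : 0 ≤ esymOn (A.erase i) j x := by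
  have hshift : ∀ c > 0, 0 < esymOn (A.erase i) j (fun t => x t + c) := fun c hc =>
    ih _ A (fun r hr => esymOn_add_const_pos (fun q hq => hx q (hq.trans hr)) (hr.trans hA) hc)
      i hi j hj
  have hlim : Tendsto (fun c : ℝ => esymOn (A.erase i) j (fun t => x t + c))
      (𝓝[>] 0) (𝓝 (esymOn (A.erase i) j x)) := by
    have hc : Continuous fun c : ℝ => esymOn (A.erase i) j (fun t => x t + c) :=
      (continuous_esymOn _ _).comp (by fun_prop)
    simpa using (hc.tendsto 0).mono_left nhdsWithin_le_nhds
  exact ge_of_tendsto hlim (eventually_nhdsWithin_of_forall fun c hc => (hshift c hc).le)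

lemma esymOn_erase_ne_zero
    (ih : ∀ (y : ι → ℝ) (B : Finset ι), y ∈ gardingCone B (k + 1) →
      ∀ i ∈ B, y ∈ gardingCone (B.erase i) k)
    (hx : x ∈ gardingCone A (k + 2)) {i : ι} (hi : i ∈ A) :
    esymOn (A.erase i) (k + 1) x ≠ 0 := by
  set B := A.erase i
  intro h0
  have hB : x ∈ gardingCone B k := ih x A (gardingCone_mono (by omega) hx) i hi
  have hBcard : k + 1 ≤ #B := by
    have := card_le_of_mem_gardingCone hx
    rw [card_erase_of_mem hi]
    omega
  have hBnonneg : ∀ j ≤ k + 1, 0 ≤ esymOn B j x := fun j hj => by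
    rcases hj.lt_or_eq with hj | rfl
    exacts [(hB j (by omega)).le, h0.ge]
  have hterm : ∀ p ∈ B, x p * esymOn (B.erase p) (k + 1) x =
      -(x p ^ 2 * esymOn (B.erase p) k x) := fun p hp => by
    have := esymOn_succ_of_mem (x := x) (j := k) hp
    rw [h0] at this
    linear_combination (-x p) * this
  have hB2 : (((k + 1 : ℕ) : ℝ) + 1) * esymOn B (k + 2) x ≤ 0 := by
    rw [← sum_mul_esymOn_erase, sum_congr rfl hterm, sum_neg_distrib, neg_nonpos]
    exact sum_nonneg fun p hp => mul_nonneg (sq_nonneg _)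
      (esymOn_erase_nonneg_of_nonneg ih hBnonneg hBcard hp le_rfl)
  have hA2 : esymOn A (k + 2) x = esymOn B (k + 2) x := by
    rw [esymOn_succ_of_mem hi, h0, mul_zero, add_zero]
  have := hx (k + 2) le_rfl
  nlinarith

theorem erase_mem_gardingCone (hx : x ∈ gardingCone A (k + 1)) {i : ι} (hi : i ∈ A) :
    x ∈ gardingCone (A.erase i) k := by
  induction k generalizing x A i with
  | zero => intro j hj; simp [Nat.le_zero.1 hj]
  | succ k ih =>
    refine mem_gardingCone_succ.2 ⟨ih (gardingCone_mono (Nat.le_succ _) hx) hi, ?_⟩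
    set g : ℝ → ℝ := fun s => esymOn (A.erase i) (k + 1) (fun t => (1 - s) * x t + s)
    have hg : ContinuousOn g (Set.Icc 0 1) :=
      ((continuous_esymOn _ _).comp (by fun_prop)).continuousOn
    have hg_ne : ∀ s ∈ Set.Icc (0 : ℝ) 1, g s ≠ 0 := fun s hs =>
      esymOn_erase_ne_zero (fun y B hy p hp => ih hy hp) (segment_one_mem_gardingCone hx hs) hi
    have hg1 : 0 < g 1 := by
      have := card_le_of_mem_gardingCone hx
      simp only [g, sub_self, zero_mul, zero_add, esymOn_one, card_erase_of_mem hi]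
      exact_mod_cast Nat.choose_pos (by omega)
    by_contra! hg0
    obtain ⟨s, hs, hgs⟩ := intermediate_value_Icc zero_le_one hg ⟨by simpa [g] using hg0, hg1.le⟩
    exact hg_ne s hs hgs

lemma esymOn_erase_le_esymOn_erase {j : ℕ} (hx : x ∈ gardingCone A (j + 2)) {i p : ι}
    (hi : i ∈ A) (hp : p ∈ A) (hpi : x p ≤ x i) :
    esymOn (A.erase i) (j + 1) x ≤ esymOn (A.erase p) (j + 1) x := by
  rcases eq_or_ne i p with rfl | hip
  · rfl
  have hpos := erase_mem_gardingCone (erase_mem_gardingCone hx hi) (mem_erase.2 ⟨hip.symm, hp⟩)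
    j le_rfl
  have := esymOn_erase_sub_esymOn_erase hi hp hip j x
  nlinarith

end GardingCone

lemma pos_of_antitone_of_mem_gardingCone [Fintype ι] [DecidableEq ι] [LinearOrder ι]
    [LocallyFiniteOrderBot ι] {x : ι → ℝ} {m : ℕ} (hx : x ∈ gardingCone univ m)
    (hanti : Antitone x) {a : ι} (ha : #(Iio a) < m) : 0 < x a := by
  by_contra! hxa
  have hIio : x ∈ gardingCone (Iio a) m := by
    simpa using sdiff_mem_gardingCone_of_nonpos hx (T := (Iio a)ᶜ) fun i hi =>
      (hanti (not_lt.1 (by simpa using hi))).trans hxa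
  exact (card_le_of_mem_gardingCone hIio).not_gt ha

section SumHess

variable {n : ℕ} {α : ℝ} {lam : Fin n → ℝ}

lemma esym_natCast (j : ℕ) : esym n j lam = esymOn univ j lam := by
  simp [esym, esymOn]

lemma esymDel_natCast (j : ℕ) (p : Fin n) : esymDel n j p lam = esymOn (univ.erase p) j lam := by
  simp [esymDel, esymOn]

lemma sumHess_natCast_succ (j : ℕ) :
    sumHess n α ((j + 1 : ℕ) : ℤ) lam = esymOn univ (j + 1) (Option.elim' α lam) := by
  rw [univ_option, esymOn_insertNone, sumHess, Nat.cast_add_one, add_sub_cancel_right,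
    ← Nat.cast_add_one, esym_natCast, esym_natCast]

lemma sumHessDel_natCast_succ (j : ℕ) (p : Fin n) :
    sumHessDel n α ((j + 1 : ℕ) : ℤ) p lam =
      esymOn (univ.erase (some p)) (j + 1) (Option.elim' α lam) := by
  have : (univ : Finset (Option (Fin n))).erase (some p) = insertNone (univ.erase p) := by
    ext (_ | _) <;> simp
  rw [this, esymOn_insertNone, sumHessDel, Nat.cast_add_one, add_sub_cancel_right,
    ← Nat.cast_add_one, esymDel_natCast, esymDel_natCast]

lemma mem_gardingCone_of_mem_Gamma {k : ℕ} (h : lam ∈ Gamma n k) : lam ∈ gardingCone univ k := by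
  intro j hj
  rcases j.eq_zero_or_pos with rfl | hj0
  · simp
  · simpa [esym_natCast] using h j (by exact_mod_cast hj0) (by exact_mod_cast hj)

lemma mem_gardingCone_of_mem_GammaTilde (hα : 0 ≤ α) {k : ℕ} (h : lam ∈ GammaTilde n α (k + 1)) :
    Option.elim' α lam ∈ gardingCone univ (k + 1) := by
  obtain ⟨hΓ, hS⟩ := h
  have hlam := mem_gardingCone_of_mem_Gamma hΓ
  refine mem_gardingCone_succ.2 ⟨fun j hj => ?_, by rwa [← sumHess_natCast_succ]⟩
  rcases j with _ | j
  · simp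
  · rw [← sumHess_natCast_succ, sumHess, Nat.cast_add_one, add_sub_cancel_right,
      ← Nat.cast_add_one, esym_natCast, esym_natCast]
    have := mul_nonneg hα (hlam j (by omega)).le
    linarith [hlam (j + 1) (by simpa using hj)]

end SumHess

theorem stmt9 (n : ℕ) (α : ℝ) (hα : 0 ≤ α) (k : ℕ) (hk : 2 ≤ k) (hkn : k ≤ n)
    (lam : Fin n → ℝ) (hlam : lam ∈ GammaTilde n α k)
    (hsort : ∀ i j : Fin n, i ≤ j → lam j ≤ lam i) :
    0 < lam (⟨k - 2, by omega⟩ : Fin n) ∧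
    (∀ i j : Fin n, i ≤ j →
      sumHessDel n α ((k : ℤ) - 1) i lam ≤ sumHessDel n α ((k : ℤ) - 1) j lam) ∧
    0 < sumHessDel n α ((k : ℤ) - 1) (⟨0, by omega⟩ : Fin n) lam := by
  obtain ⟨m, rfl⟩ : ∃ m, k = m + 2 := ⟨k - 2, by omega⟩
  have hcast : ((m + 2 : ℕ) : ℤ) - 1 = ((m + 1 : ℕ) : ℤ) := by push_cast; ring
  have hx := mem_gardingCone_of_mem_GammaTilde hα hlam
  simp only [hcast, sumHessDel_natCast_succ]
  refine ⟨?_, fun i j hij => ?_, ?_⟩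
  · exact pos_of_antitone_of_mem_gardingCone (mem_gardingCone_of_mem_Gamma hlam.1) hsort
      (by simp)
  · exact esymOn_erase_le_esymOn_erase hx (mem_univ _) (mem_univ _) (hsort i j hij)
  · exact erase_mem_gardingCone hx (mem_univ _) (m + 1) le_rfl
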